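/- Let T ∈ (0, ∞), σ ∈ (0, 1) and p ∈ [1, ∞) with σp < 1. Let (Ω, ℱ, μ) be a probability space and let Π : [0, T] × Ω → ℕ be a process such that for μ-almost every ω the path t ↦ Π(t, ω) is nondecreasing with Π(0, ω) = 0 and Π(T, ω) < ∞. Then for μ-almost every ω one has ∫₀^T ∫₀^T |Π(t, ω) − Π(s, ω)|^p / |t − s|^{1 + σp} dt ds < ∞, i.e. almost every sample path of Π belongs to the fractional Sobolev space W^{σ,p}(0, T). -/

import Mathlib

/-!
A path `f : ℝ → ℕ` that is nondecreasing on `[0, T]` has at most `N = f T` jumps, at the times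
`a k = inf {u | k < f u}`, and `|f t - f s|` is at most the number of `a k` lying between `s`
and `t`. Since `|f t - f s|` is an integer in `[0, N]` and `p ≥ 1`, its `p`-th power is at most
`N ^ (p - 1) |f t - f s|`, so the Slobodeckij integrand is dominated by `N ^ (p - 1)` times a sum
of `N` kernels `|t - s| ^ (-(1 + σp))` restricted to the pairs `(s, t)` straddling some `a`.
Since then `|t - s| ≥ max (|s - a|, |t - a|)`, such a kernel is at most
`|s - a| ^ (-q) * |t - a| ^ (-q)` with `q = (1 + σp) / 2 < 1`, a product of two locally
integrable functions.
-/

open MeasureTheory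

/-- The Sobolev–Slobodeckij double integral on `(0,T)`. -/
noncomputable def slobodeckijSeminorm (T σ p : ℝ) (v : ℝ → ℝ) : ENNReal :=
  ∫⁻ s in Set.Ioc (0 : ℝ) T, ∫⁻ t in Set.Ioc (0 : ℝ) T,
    ENNReal.ofReal (|v t - v s| ^ p / |t - s| ^ (1 + σ * p))

open Set

lemma rpow_le_rpow_sub_one_mul {x y p : ℝ} (hx : 0 ≤ x) (hxy : x ≤ y) (hp : 1 ≤ p) :
    x ^ p ≤ y ^ (p - 1) * x := by
  rcases hx.eq_or_lt with rfl | hx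
  · rw [Real.zero_rpow (by linarith), mul_zero]
  · calc x ^ p = x ^ (p - 1) * x := by rw [Real.rpow_sub_one hx.ne', div_mul_cancel₀ _ hx.ne']
      _ ≤ y ^ (p - 1) * x := by gcongr

section JumpTime

variable {α β : Type*} [ConditionallyCompleteLinearOrder α] [Preorder β]

noncomputable def jumpTime (f : α → β) (S : Set α) (k : β) : α :=
  sInf {u ∈ S | k < f u}

lemma jumpTime_mem_Icc {f : α → β} {S : Set α} {k : β} {s t : α} (hf : MonotoneOn f S)
    (hs : s ∈ S) (ht : t ∈ S) (hks : f s ≤ k) (hkt : k < f t) : jumpTime f S k ∈ Icc s t := by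
  have hlower : s ∈ lowerBounds {u ∈ S | k < f u} := fun u ⟨hu, hku⟩ => by
    by_contra! hus
    exact (hku.trans_le ((hf hu hs hus.le).trans hks)).false
  exact ⟨le_csInf ⟨t, ht, hkt⟩ hlower, csInf_le ⟨s, hlower⟩ ⟨ht, hkt⟩⟩

end JumpTime

open Classical in
lemma abs_sub_le_card_jumpTime_mem_uIcc {f : ℝ → ℕ} {S : Set ℝ} {s t : ℝ} {N : ℕ}
    (hf : MonotoneOn f S) (hs : s ∈ S) (ht : t ∈ S) (hsN : f s ≤ N) (htN : f t ≤ N) :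
    |(f t : ℝ) - f s| ≤ ((Finset.range N).filter fun k => jumpTime f S k ∈ uIcc s t).card := by
  wlog hst : s ≤ t generalizing s t
  · rw [abs_sub_comm, uIcc_comm]
    exact this ht hs htN hsN (le_of_not_ge hst)
  have hfst : f s ≤ f t := hf hs ht hst
  rw [abs_of_nonneg (by simpa using hfst), ← Nat.cast_sub hfst, ← Nat.card_Ico, Nat.cast_le]
  refine Finset.card_le_card fun k hk => ?_
  rw [Finset.mem_Ico] at hk
  rw [Finset.mem_filter, Finset.mem_range]
  exact ⟨hk.2.trans_le htN, Icc_subset_uIcc (jumpTime_mem_Icc hf hs ht hk.1 hk.2)⟩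

open Classical in
noncomputable def crossingKernel (r a s t : ℝ) : ℝ :=
  if a ∈ uIcc s t then |t - s| ^ (-(1 + r)) else 0

lemma crossingKernel_nonneg (r a s t : ℝ) : 0 ≤ crossingKernel r a s t := by
  unfold crossingKernel
  split_ifs <;> positivity

lemma measurable_crossingKernel (r a : ℝ) :
    Measurable (Function.uncurry (crossingKernel r a)) := by
  refine Measurable.ite ?_ ((measurable_snd.sub measurable_fst).abs.pow_const _) measurable_const
  exact (measurableSet_le (measurable_fst.min measurable_snd) measurable_const).inter
    (measurableSet_le measurable_const (measurable_fst.max measurable_snd))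

lemma crossingKernel_le_mul {r a s t : ℝ} (hr : -1 ≤ r) (hs : s ≠ a) (ht : t ≠ a) :
    crossingKernel r a s t ≤ |s - a| ^ (-((1 + r) / 2)) * |t - a| ^ (-((1 + r) / 2)) := by
  unfold crossingKernel
  split_ifs with ha
  · have hsa : 0 < |s - a| := abs_pos.2 (sub_ne_zero.2 hs)
    have hta : 0 < |t - a| := abs_pos.2 (sub_ne_zero.2 ht)
    have hs_le : |s - a| ≤ |t - s| := by
      simpa [abs_sub_comm] using abs_sub_left_of_mem_uIcc ha
    have hq : -((1 + r) / 2) ≤ 0 := by linarith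
    rw [show -(1 + r) = -((1 + r) / 2) + -((1 + r) / 2) by ring,
      Real.rpow_add (hsa.trans_le hs_le)]
    gcongr ?_ * ?_
    · exact Real.rpow_le_rpow_of_nonpos hsa hs_le hq
    · exact Real.rpow_le_rpow_of_nonpos hta (abs_sub_right_of_mem_uIcc ha) hq
  · positivity

lemma integrableOn_Ioc_abs_sub_rpow {q : ℝ} (hq : q < 1) (a b c : ℝ) :
    IntegrableOn (fun x => |x - a| ^ (-q)) (Ioc b c) := by
  have hloc : LocallyIntegrable (fun x : ℝ => |x| ^ (-q)) :=
    locallyIntegrable_of_norm_le_rpow (C := 1) (by simp) (by simpa using hq)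
      (Filter.Eventually.of_forall fun x => by simp [abs_of_nonneg, Real.rpow_nonneg])
      (measurable_abs.pow_const _).aestronglyMeasurable
  have h := ((hloc.integrableOn_isCompact isCompact_uIcc).intervalIntegrable
    (a := b - a) (b := c - a)).comp_sub_right a
  simp only [sub_add_cancel] at h
  exact h.1

lemma lintegral_crossingKernel_lt_top {r : ℝ} (hr : -1 ≤ r) (hr1 : r < 1) (a b c : ℝ) :
    ∫⁻ s in Ioc b c, ∫⁻ t in Ioc b c, ENNReal.ofReal (crossingKernel r a s t) < ⊤ := by
  set g : ℝ → ℝ := fun x => |x - a| ^ (-((1 + r) / 2))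
  have hg : ∫⁻ x in Ioc b c, ENNReal.ofReal (g x) < ⊤ :=
    (integrableOn_Ioc_abs_sub_rpow (by linarith) a b c).lintegral_lt_top
  have hgm : Measurable fun x => ENNReal.ofReal (g x) := by fun_prop
  calc ∫⁻ s in Ioc b c, ∫⁻ t in Ioc b c, ENNReal.ofReal (crossingKernel r a s t)
      ≤ ∫⁻ s in Ioc b c, ∫⁻ t in Ioc b c, ENNReal.ofReal (g s) * ENNReal.ofReal (g t) := by
        -- only almost everywhere: at `s = a` the junk value `0 ^ (-q) = 0` breaks the bound
        refine lintegral_mono_ae ?_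
        filter_upwards [ae_restrict_of_ae (Measure.ae_ne volume a)] with s hs
        refine lintegral_mono_ae ?_
        filter_upwards [ae_restrict_of_ae (Measure.ae_ne volume a)] with t ht
        rw [← ENNReal.ofReal_mul (by positivity)]
        exact ENNReal.ofReal_le_ofReal (crossingKernel_le_mul hr hs ht)
    _ = (∫⁻ x in Ioc b c, ENNReal.ofReal (g x)) * ∫⁻ x in Ioc b c, ENNReal.ofReal (g x) :=
        lintegral_lintegral_mul hgm.aemeasurable hgm.aemeasurable
    _ < ⊤ := ENNReal.mul_lt_top hg hg

open Classical in
lemma sum_crossingKernel_jumpTime (f : ℝ → ℕ) (S : Set ℝ) (N : ℕ) (r s t : ℝ) :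
    ∑ k ∈ Finset.range N, crossingKernel r (jumpTime f S k) s t
      = ((Finset.range N).filter fun k => jumpTime f S k ∈ uIcc s t).card
          * |t - s| ^ (-(1 + r)) := by
  simp only [crossingKernel, Finset.sum_ite, Finset.sum_const_zero, add_zero, Finset.sum_const,
    nsmul_eq_mul]

lemma rpow_div_rpow_le_sum_crossingKernel {f : ℝ → ℕ} {S : Set ℝ} {s t p r : ℝ} {N : ℕ}
    (hf : MonotoneOn f S) (hs : s ∈ S) (ht : t ∈ S) (hsN : f s ≤ N) (htN : f t ≤ N) (hp : 1 ≤ p) :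
    |(f t : ℝ) - f s| ^ p / |t - s| ^ (1 + r)
      ≤ (N : ℝ) ^ (p - 1) * ∑ k ∈ Finset.range N, crossingKernel r (jumpTime f S k) s t := by
  have hN : |(f t : ℝ) - f s| ≤ N :=
    abs_sub_le_of_nonneg_of_le (Nat.cast_nonneg _) (by exact_mod_cast htN) (Nat.cast_nonneg _)
      (by exact_mod_cast hsN)
  rw [sum_crossingKernel_jumpTime, div_eq_mul_inv, ← Real.rpow_neg (abs_nonneg _), ← mul_assoc]
  gcongr
  calc |(f t : ℝ) - f s| ^ p ≤ (N : ℝ) ^ (p - 1) * |(f t : ℝ) - f s| :=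
        rpow_le_rpow_sub_one_mul (abs_nonneg _) hN hp
    _ ≤ _ := by gcongr; exact abs_sub_le_card_jumpTime_mem_uIcc hf hs ht hsN htN

lemma slobodeckijSeminorm_natCast_lt_top {T σ p : ℝ} {f : ℝ → ℕ} (hf : MonotoneOn f (Icc 0 T))
    (hσ : 0 ≤ σ) (hp : 1 ≤ p) (hσp : σ * p < 1) :
    slobodeckijSeminorm T σ p (fun t => (f t : ℝ)) < ⊤ := by
  set a : ℕ → ℝ := jumpTime f (Icc 0 T)
  set C := ENNReal.ofReal ((f T : ℝ) ^ (p - 1))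
  set K : ℕ → ℝ → ℝ → ENNReal := fun k s t => ENNReal.ofReal (crossingKernel (σ * p) (a k) s t)
  have hK : ∀ k, Measurable (Function.uncurry (K k)) := fun k =>
    ENNReal.measurable_ofReal.comp (measurable_crossingKernel _ _)
  have hbound : ∀ x ∈ Ioc 0 T, x ∈ Icc 0 T ∧ f x ≤ f T := fun x hx =>
    ⟨Ioc_subset_Icc_self hx, hf (Ioc_subset_Icc_self hx) ⟨hx.1.le.trans hx.2, le_rfl⟩ hx.2⟩
  calc slobodeckijSeminorm T σ p (fun t => (f t : ℝ))
      ≤ ∫⁻ s in Ioc 0 T, ∫⁻ t in Ioc 0 T, C * ∑ k ∈ Finset.range (f T), K k s t := by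
        refine setLIntegral_mono' measurableSet_Ioc fun s hs =>
          setLIntegral_mono' measurableSet_Ioc fun t ht => ?_
        rw [← ENNReal.ofReal_sum_of_nonneg fun k _ => crossingKernel_nonneg _ _ _ _,
          ← ENNReal.ofReal_mul (by positivity)]
        exact ENNReal.ofReal_le_ofReal <| rpow_div_rpow_le_sum_crossingKernel hf
          (hbound s hs).1 (hbound t ht).1 (hbound s hs).2 (hbound t ht).2 hp
    _ = C * ∑ k ∈ Finset.range (f T), ∫⁻ s in Ioc 0 T, ∫⁻ t in Ioc 0 T, K k s t := by
        have hinner : ∀ s, ∫⁻ t in Ioc 0 T, C * ∑ k ∈ Finset.range (f T), K k s t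
            = C * ∑ k ∈ Finset.range (f T), ∫⁻ t in Ioc 0 T, K k s t := fun s => by
          rw [lintegral_const_mul' _ _ ENNReal.ofReal_ne_top,
            lintegral_finsetSum (f := fun k t => K k s t) _ fun k _ =>
              (hK k).comp measurable_prodMk_left]
        rw [lintegral_congr hinner, lintegral_const_mul' _ _ ENNReal.ofReal_ne_top,
          lintegral_finsetSum (f := fun k s => ∫⁻ t in Ioc 0 T, K k s t) _ fun k _ =>
            (hK k).lintegral_prod_right']
    _ < ⊤ := ENNReal.mul_lt_top ENNReal.ofReal_lt_top <| ENNReal.sum_lt_top.2 fun k _ =>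
        lintegral_crossingKernel_lt_top (by nlinarith) hσp _ _ _

theorem poisson_paths_sobolev_general (T σ p : ℝ)
    (hσ : σ ∈ Set.Ioo (0 : ℝ) 1) (hp : 1 ≤ p) (hσp : σ * p < 1)
    (Ω : Type) [MeasurableSpace Ω] (μ : Measure Ω)
    (Po : ℝ → Ω → ℕ)
    (hpath : ∀ᵐ ω ∂μ, MonotoneOn (fun t => Po t ω) (Set.Icc 0 T) ∧ Po 0 ω = 0) :
    ∀ᵐ ω ∂μ, slobodeckijSeminorm T σ p (fun t => (Po t ω : ℝ)) < ⊤ := by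
  filter_upwards [hpath] with ω hω
  exact slobodeckijSeminorm_natCast_lt_top hω.1 hσ.1.le hp hσp

/-- If the paths of an `ℕ`-valued process `Π` are almost surely nondecreasing on `[0,T]`
with `Π(0) = 0`, then for `σ ∈ (0,1)`, `p ∈ [1,∞)` with `σp < 1`, almost every sample path
has finite Sobolev–Slobodeckij double integral, i.e. belongs to `W^{σ,p}(0,T)`. -/
theorem poisson_paths_sobolev (T σ p : ℝ) (hT : 0 < T)
    (hσ : σ ∈ Set.Ioo (0 : ℝ) 1) (hp : 1 ≤ p) (hσp : σ * p < 1)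
    (Ω : Type) [MeasurableSpace Ω] (μ : Measure Ω) [IsProbabilityMeasure μ]
    (Po : ℝ → Ω → ℕ)
    (hpath : ∀ᵐ ω ∂μ, MonotoneOn (fun t => Po t ω) (Set.Icc 0 T) ∧ Po 0 ω = 0) :
    ∀ᵐ ω ∂μ, slobodeckijSeminorm T σ p (fun t => (Po t ω : ℝ)) < ⊤ :=
  poisson_paths_sobolev_general T σ p hσ hp hσp Ω μ Po hpath
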